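/- Let 0 < α < 1 and let (V, P) be a C¹ homogeneous solution of degree −α of the stationary Euler equations on ℝ³ ∖ {0}. Then the Bernoulli function is nonpositive everywhere: |V(x)|² + 2P(x) ≤ 0 for all x ≠ 0; in particular P(x) ≤ 0 for all x ≠ 0. -/

import Mathlib

noncomputable section

open Real MeasureTheory Metric

/-- Three-dimensional Euclidean space. -/
abbrev E3 : Type := EuclideanSpace ℝ (Fin 3)

/-- The `i`-th standard basis vector of `ℝ³`. -/
def e3 (i : Fin 3) : E3 := EuclideanSpace.single i 1

/-- Make a vector in `ℝ³` out of three coordinates. -/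
def vec3 (a b c : ℝ) : E3 := (WithLp.equiv 2 (Fin 3 → ℝ)).symm ![a, b, c]

/-- Divergence of a vector field on `ℝ³`. -/
def div3 (V : E3 → E3) (x : E3) : ℝ := ∑ i, fderiv ℝ V x (e3 i) i

/-- Curl (vorticity) of a vector field on `ℝ³`. -/
def curl3 (V : E3 → E3) (x : E3) : E3 :=
  vec3 (fderiv ℝ V x (e3 1) 2 - fderiv ℝ V x (e3 2) 1)
       (fderiv ℝ V x (e3 2) 0 - fderiv ℝ V x (e3 0) 2)
       (fderiv ℝ V x (e3 0) 1 - fderiv ℝ V x (e3 1) 0)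

/-- Cross product on `ℝ³`. -/
def cross3 (u v : E3) : E3 :=
  vec3 (u 1 * v 2 - u 2 * v 1) (u 2 * v 0 - u 0 * v 2) (u 0 * v 1 - u 1 * v 0)

/-- `(V, P)` is a `C¹` homogeneous solution of degree `-α` of the stationary
Euler equations on `ℝ³ \ {0}`: `V`, `P` are `C¹` away from the origin,
positively homogeneous of degrees `-α` and `-2α` respectively, and
`(V·∇)V + ∇P = 0`, `div V = 0` hold pointwise away from the origin. -/
structure IsHomogEuler (α : ℝ) (V : E3 → E3) (P : E3 → ℝ) : Prop where
  contV : ContDiffOn ℝ 1 V {(0 : E3)}ᶜ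
  contP : ContDiffOn ℝ 1 P {(0 : E3)}ᶜ
  homV : ∀ l : ℝ, 0 < l → ∀ x : E3, x ≠ 0 → V (l • x) = l ^ (-α) • V x
  homP : ∀ l : ℝ, 0 < l → ∀ x : E3, x ≠ 0 → P (l • x) = l ^ (-(2 * α)) * P x
  euler : ∀ x : E3, x ≠ 0 → fderiv ℝ V x (V x) + gradient P x = 0
  divFree : ∀ x : E3, x ≠ 0 → div3 V x = 0

/-!
Suppose `B = ‖V‖² + 2P` were positive at some `x₀ ≠ 0`; replacing `V` by `-V` if necessary,
`⟪x₀, V x₀⟫ ≥ 0`. Along the trajectory `γ' = V ∘ γ` from `x₀` the Euler equation keeps `B`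
equal to `c = B x₀ > 0`, and together with Euler's relation `⟪x, ∇P x⟫ = -2α P x` it gives
`d/dt ⟪γ, V ∘ γ⟫ = ‖V‖² + 2αP = (1 - α) ‖V‖² + α c ≥ α c`, whence `‖γ t‖² ≥ ‖x₀‖² + α c t²`.
So the trajectory never reaches the origin, exists for all times and escapes to infinity,
while homogeneity gives `|B x| ≤ M ‖x‖ ^ (-2α) → 0`: a contradiction with `B (γ t) = c`.
-/

open Set Filter Topology InnerProductSpace
open scoped NNReal

theorem monotoneOn_Icc_of_hasDerivWithinAt_nonneg {f f' : ℝ → ℝ} {a b : ℝ}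
    (hf : ∀ t ∈ Icc a b, HasDerivWithinAt f (f' t) (Icc a b) t)
    (hf' : ∀ t ∈ Ioo a b, 0 ≤ f' t) : MonotoneOn f (Icc a b) := by
  refine monotoneOn_of_hasDerivWithinAt_nonneg (convex_Icc a b)
    (fun t ht ↦ (hf t ht).continuousWithinAt) (fun t ht ↦ ?_) (by rwa [interior_Icc])
  rw [interior_Icc] at ht ⊢
  exact (hf t (Ioo_subset_Icc_self ht)).mono Ioo_subset_Icc_self

theorem fderiv_apply_self_of_homogeneous {E F : Type*} [NormedAddCommGroup E] [NormedSpace ℝ E]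
    [NormedAddCommGroup F] [NormedSpace ℝ F] {f : E → F} {k : ℝ} {x : E}
    (hf : ∀ l : ℝ, 0 < l → f (l • x) = l ^ k • f x) (hd : DifferentiableAt ℝ f x) :
    fderiv ℝ f x x = k • f x := by
  have hray : HasDerivAt (fun l : ℝ ↦ f (l • x)) (fderiv ℝ f x x) 1 := by
    have := (one_smul ℝ x).symm ▸ hd.hasFDerivAt
    simpa [Function.comp_def] using
      this.comp_hasDerivAt (1 : ℝ) ((hasDerivAt_id (1 : ℝ)).smul_const x)
  have hpow : HasDerivAt (fun l : ℝ ↦ l ^ k • f x) (k • f x) 1 := by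
    simpa using (hasDerivAt_rpow_const (p := k) (Or.inl one_ne_zero)).smul_const (f x)
  exact hray.unique <| hpow.congr_of_eventuallyEq <|
    (eventually_gt_nhds one_pos).mono fun l hl ↦ hf l hl

theorem exists_norm_le_mul_rpow_of_homogeneous {E F : Type*} [NormedAddCommGroup E]
    [NormedSpace ℝ E] [FiniteDimensional ℝ E] [NormedAddCommGroup F] [NormedSpace ℝ F]
    {f : E → F} {k : ℝ} (hf : ∀ l : ℝ, 0 < l → ∀ x : E, x ≠ 0 → f (l • x) = l ^ k • f x)
    (hc : ContinuousOn f {0}ᶜ) :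
    ∃ M, 0 ≤ M ∧ ∀ x : E, x ≠ 0 → ‖f x‖ ≤ M * ‖x‖ ^ k := by
  have hsphere : sphere (0 : E) 1 ⊆ {0}ᶜ := fun u hu h0 ↦ by simp_all
  obtain ⟨M, hM⟩ := (isCompact_sphere (0 : E) 1).exists_bound_of_continuousOn (hc.mono hsphere)
  refine ⟨max M 0, le_max_right _ _, fun x hx ↦ ?_⟩
  have hx' : 0 < ‖x‖ := norm_pos_iff.2 hx
  set u := ‖x‖⁻¹ • x
  have hu : u ∈ sphere (0 : E) 1 := by simp [u, norm_smul, hx'.ne']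
  have hxu : x = ‖x‖ • u := by simp [u, smul_smul, hx'.ne']
  calc ‖f x‖ = ‖x‖ ^ k * ‖f u‖ := by
        rw [hxu, hf _ hx' u (hsphere hu), norm_smul, Real.norm_of_nonneg (by positivity),
          ← hxu]
    _ ≤ ‖x‖ ^ k * max M 0 := by gcongr; exact (hM u hu).trans (le_max_left _ _)
    _ = max M 0 * ‖x‖ ^ k := mul_comm _ _

section IntegralCurve

variable {E : Type*} [NormedAddCommGroup E] [NormedSpace ℝ E]

theorem IsIntegralCurveOn.ite_Icc {γ γ' : ℝ → E} {v : ℝ → E → E} {a b c : ℝ}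
    (hγ : IsIntegralCurveOn γ v (Icc a b)) (hγ' : IsIntegralCurveOn γ' v (Icc b c))
    (hb : γ b = γ' b) :
    IsIntegralCurveOn (fun t ↦ if t ≤ b then γ t else γ' t) v (Icc a c) := by
  set η := fun t ↦ if t ≤ b then γ t else γ' t
  have hηγ : ∀ t ∈ Icc a b, η t = γ t := fun t ht ↦ if_pos ht.2
  have hηγ' : ∀ t ∈ Icc b c, η t = γ' t := fun t ht ↦ by
    rcases ht.1.eq_or_lt with rfl | hbt
    · exact (if_pos le_rfl).trans hb
    · exact if_neg hbt.not_ge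
  intro t ht
  have hleft : HasDerivWithinAt η (v t (η t)) (Icc a b) t := by
    by_cases htb : t ≤ b
    · rw [hηγ t ⟨ht.1, htb⟩]
      exact (hγ t ⟨ht.1, htb⟩).congr_of_mem hηγ ⟨ht.1, htb⟩
    · exact HasFDerivWithinAt.of_notMem_closure (by rw [closure_Icc]; exact fun h ↦ htb h.2)
  have hright : HasDerivWithinAt η (v t (η t)) (Icc b c) t := by
    by_cases hbt : b ≤ t
    · rw [hηγ' t ⟨hbt, ht.2⟩]
      exact (hγ' t ⟨hbt, ht.2⟩).congr_of_mem hηγ' ⟨hbt, ht.2⟩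
    · exact HasFDerivWithinAt.of_notMem_closure (by rw [closure_Icc]; exact fun h ↦ hbt h.1)
  exact (hleft.union hright).mono Icc_subset_Icc_union_Icc

theorem IsIntegralCurveOn.mapsTo_closedBall {V : E → E} {γ : ℝ → E} {a b C r : ℝ}
    (hγ : IsIntegralCurveOn γ (fun _ ↦ V) (Icc a b)) (hC : 0 ≤ C)
    (hV : ∀ z ∈ closedBall (γ a) r, ‖V z‖ ≤ C) (hCr : C * (b - a) < r) :
    MapsTo γ (Icc a b) (closedBall (γ a) r) := by
  intro t ht
  rcases (ht.1.trans ht.2).eq_or_lt with rfl | hab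
  · obtain rfl : t = a := le_antisymm ht.2 ht.1
    exact mem_closedBall_self (by linarith)
  set k := r / (b - a)
  have hCk : C < k := (lt_div_iff₀ (sub_pos.2 hab)).2 hCr
  have hkr : ∀ s ≤ b, k * (s - a) ≤ r := fun s hs ↦ by
    calc k * (s - a) ≤ k * (b - a) := by gcongr; linarith
      _ = r := div_mul_cancel₀ r (sub_pos.2 hab).ne'
  rw [mem_closedBall, dist_eq_norm]
  -- `‖γ t - γ a‖` cannot catch up with `k (t - a)`, since the speed stays below `k` in the ball
  refine (image_norm_le_of_norm_deriv_right_lt_deriv_boundary'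
    (f := fun t ↦ γ t - γ a) (B := fun t ↦ k * (t - a)) (B' := fun _ ↦ k)
    (hγ.continuousOn.sub continuousOn_const)
    (fun s hs ↦ ((hγ s (Ico_subset_Icc_self hs)).mono_of_mem_nhdsWithin
      (Icc_mem_nhdsGE_of_mem hs)).sub_const (γ a))
    (by simp) (by fun_prop)
    (fun s _ ↦ by simpa using (((hasDerivAt_id s).sub_const a).const_mul k).hasDerivWithinAt)
    (fun s hs hγs ↦ (hV _ ?_).trans_lt hCk) ht).trans (hkr t ht.2)
  rw [mem_closedBall, dist_eq_norm, hγs]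
  exact hkr s hs.2.le

theorem exists_isIntegralCurveOn_Icc_mapsTo_closedBall [CompleteSpace E] {V : E → E} {y : E}
    {r C : ℝ} {L : ℝ≥0} (hr : 0 ≤ r) (hV : ∀ z ∈ closedBall y r, ‖V z‖ ≤ C)
    (hL : LipschitzOnWith L V (closedBall y r)) (a : ℝ) {ε : ℝ} (hε : 0 ≤ ε) (hCε : C * ε < r) :
    ∃ γ : ℝ → E, γ a = y ∧ IsIntegralCurveOn γ (fun _ ↦ V) (Icc a (a + ε)) ∧
      MapsTo γ (Icc a (a + ε)) (closedBall y r) := by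
  have hC : 0 ≤ C := (norm_nonneg _).trans (hV y (mem_closedBall_self hr))
  have hpl : IsPicardLindelof (fun _ ↦ V) (tmin := a) (tmax := a + ε)
      ⟨a, left_mem_Icc.2 (by linarith)⟩ y ⟨r, hr⟩ 0 ⟨C, hC⟩ L :=
    .of_time_independent hV hL (by
      simp only [NNReal.coe_zero, add_sub_cancel_left, sub_self, max_eq_left hε,
        sub_zero]
      exact hCε.le)
  obtain ⟨γ, hγa, hγ⟩ := hpl.exists_eq_forall_mem_Icc_hasDerivWithinAt₀
  refine ⟨γ, hγa, hγ, hγa ▸ IsIntegralCurveOn.mapsTo_closedBall hγ hC (hγa ▸ hV) ?_⟩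
  simpa using hCε

theorem IsCompact.exists_pos_forall_exists_isIntegralCurveOn [FiniteDimensional ℝ E]
    {V : E → E} {U K : Set E} (hK : IsCompact K) (hU : IsOpen U) (hV : ContDiffOn ℝ 1 V U)
    (hKU : K ⊆ U) :
    ∃ ε > 0, ∀ y ∈ K, ∀ a : ℝ, ∃ γ : ℝ → E, γ a = y ∧
      IsIntegralCurveOn γ (fun _ ↦ V) (Icc a (a + ε)) ∧ MapsTo γ (Icc a (a + ε)) U := by
  obtain ⟨δ, hδ, hδU⟩ := hK.exists_cthickening_subset_open hU hKU
  have hK' : IsCompact (cthickening δ K) := hK.cthickening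
  obtain ⟨C, hC⟩ := hK'.exists_bound_of_continuousOn (hV.continuousOn.mono hδU)
  obtain ⟨L, hL⟩ := hK'.exists_bound_of_continuousOn
    ((hV.continuousOn_fderiv_of_isOpen hU le_rfl).mono hδU)
  refine ⟨δ / (|C| + 1), by positivity, fun y hy a ↦ ?_⟩
  have hball : closedBall y δ ⊆ cthickening δ K := closedBall_subset_cthickening hy δ
  have hLip : LipschitzOnWith L.toNNReal V (closedBall y δ) :=
    (convex_closedBall y δ).lipschitzOnWith_of_nnnorm_hasFDerivWithin_le
      (fun z hz ↦ (hV.differentiableOn one_ne_zero z (hδU (hball hz))).differentiableAt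
        (hU.mem_nhds (hδU (hball hz))) |>.hasFDerivAt.hasFDerivWithinAt)
      (fun z hz ↦ by
        rw [← NNReal.coe_le_coe, coe_nnnorm]
        exact (hL z (hball hz)).trans (Real.le_coe_toNNReal L))
  obtain ⟨γ, hγa, hγ, hγy⟩ := exists_isIntegralCurveOn_Icc_mapsTo_closedBall hδ.le
    (fun z hz ↦ (hC z (hball hz)).trans (le_abs_self C)) hLip a (ε := δ / (|C| + 1))
    (by positivity)
    (by rw [mul_div_assoc', div_lt_iff₀ (by positivity)]; nlinarith [abs_nonneg C])
  exact ⟨γ, hγa, hγ, (hγy.mono_right hball).mono_right hδU⟩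

theorem exists_isIntegralCurveOn_Icc_of_mapsTo [FiniteDimensional ℝ E] {V : E → E}
    {U K : Set E} (hU : IsOpen U) (hV : ContDiffOn ℝ 1 V U) (hK : IsCompact K) (hKU : K ⊆ U)
    {x₀ : E} (hx₀ : x₀ ∈ K) {T : ℝ} (hT : 0 ≤ T)
    (hconfined : ∀ a ≤ T, ∀ γ : ℝ → E, γ 0 = x₀ → IsIntegralCurveOn γ (fun _ ↦ V) (Icc 0 a) →
      MapsTo γ (Icc 0 a) U → MapsTo γ (Icc 0 a) K) :
    ∃ γ : ℝ → E, γ 0 = x₀ ∧ IsIntegralCurveOn γ (fun _ ↦ V) (Icc 0 T) ∧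
      MapsTo γ (Icc 0 T) K := by
  obtain ⟨ε, hε, hstep⟩ := hK.exists_pos_forall_exists_isIntegralCurveOn hU hV hKU
  let Solvable (a : ℝ) : Prop := ∃ γ : ℝ → E, γ 0 = x₀ ∧
    IsIntegralCurveOn γ (fun _ ↦ V) (Icc 0 a) ∧ MapsTo γ (Icc 0 a) K
  have hextend : ∀ a, 0 ≤ a → Solvable a → Solvable (min (a + ε) T) := by
    rintro a ha0 ⟨γ, hγ0, hγ, hγK⟩
    obtain ⟨γ', hγ'a, hγ', hγ'U⟩ := hstep (γ a) (hγK ⟨ha0, le_rfl⟩) a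
    set b := min (a + ε) T
    have hη := hγ.ite_Icc hγ' hγ'a.symm
    refine ⟨_, if_pos ha0 ▸ hγ0, hη.mono (Icc_subset_Icc_right (min_le_left _ _)),
      hconfined b (min_le_right _ _) _ (if_pos ha0 ▸ hγ0)
        (hη.mono (Icc_subset_Icc_right (min_le_left _ _))) fun t ht ↦ ?_⟩
    by_cases hta : t ≤ a
    · simpa [hta] using hKU (hγK ⟨ht.1, hta⟩)
    · simpa [hta] using hγ'U ⟨(not_le.1 hta).le, ht.2.trans (min_le_left _ _)⟩
  have hsolvable : ∀ n : ℕ, Solvable (min (n * ε) T) := by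
    intro n
    induction n with
    | zero =>
      refine ⟨fun _ ↦ x₀, rfl, fun t ht ↦ ?_, fun t _ ↦ hx₀⟩
      simp only [Nat.cast_zero, zero_mul, min_eq_left hT, Icc_self] at ht ⊢
      exact HasFDerivWithinAt.of_not_accPt fun h ↦
        (finite_singleton _).not_infinite (Set.Infinite.of_accPt h)
    | succ n ih =>
      have := hextend _ (le_min (by positivity) hT) ih
      rwa [← min_add_add_right, min_assoc, min_eq_right (le_add_of_nonneg_right hε.le),
        ← add_one_mul, ← Nat.cast_succ] at this
  have hN : min (⌈T / ε⌉₊ * ε) T = T :=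
    min_eq_right ((div_le_iff₀ hε).1 (Nat.le_ceil _))
  exact hN ▸ hsolvable ⌈T / ε⌉₊

end IntegralCurve

def bernoulliFunction (V : E3 → E3) (P : E3 → ℝ) (x : E3) : ℝ := ‖V x‖ ^ 2 + 2 * P x

namespace IsHomogEuler

variable {α : ℝ} {V : E3 → E3} {P : E3 → ℝ}

theorem differentiableAt_velocity (h : IsHomogEuler α V P) {x : E3} (hx : x ≠ 0) :
    DifferentiableAt ℝ V x :=
  (h.contV.contDiffAt (isOpen_compl_singleton.mem_nhds hx)).differentiableAt one_ne_zero

theorem differentiableAt_pressure (h : IsHomogEuler α V P) {x : E3} (hx : x ≠ 0) :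
    DifferentiableAt ℝ P x :=
  (h.contP.contDiffAt (isOpen_compl_singleton.mem_nhds hx)).differentiableAt one_ne_zero

theorem inner_fderiv_velocity_apply (h : IsHomogEuler α V P) {x : E3} (hx : x ≠ 0) (w : E3) :
    ⟪fderiv ℝ V x (V x), w⟫_ℝ = -fderiv ℝ P x w := by
  rw [eq_neg_of_add_eq_zero_left (h.euler x hx), inner_neg_left, gradient,
    toDual_symm_apply]

theorem fderiv_pressure_apply_self (h : IsHomogEuler α V P) {x : E3} (hx : x ≠ 0) :
    fderiv ℝ P x x = -(2 * α) * P x :=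
  fderiv_apply_self_of_homogeneous (fun l hl ↦ h.homP l hl x hx) (h.differentiableAt_pressure hx)

theorem continuousOn_bernoulliFunction (h : IsHomogEuler α V P) :
    ContinuousOn (bernoulliFunction V P) {0}ᶜ :=
  (h.contV.continuousOn.norm.pow 2).add (continuousOn_const.mul h.contP.continuousOn)

theorem bernoulliFunction_smul (h : IsHomogEuler α V P) {l : ℝ} (hl : 0 < l) {x : E3} (hx : x ≠ 0) :
    bernoulliFunction V P (l • x) = l ^ (-(2 * α)) • bernoulliFunction V P x := by
  have hsq : (l ^ (-α)) ^ 2 = l ^ (-(2 * α)) := by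
    rw [← rpow_natCast, ← rpow_mul hl.le]; ring_nf
  simp only [bernoulliFunction, h.homV l hl x hx, h.homP l hl x hx, norm_smul, mul_pow,
    Real.norm_of_nonneg (rpow_nonneg hl.le _), hsq, smul_eq_mul]
  ring

theorem exists_bernoulliFunction_lt (h : IsHomogEuler α V P) (hα : 0 < α) {c : ℝ} (hc : 0 < c) :
    ∃ ρ > 0, ∀ x : E3, ρ ≤ ‖x‖ → bernoulliFunction V P x < c := by
  obtain ⟨M, -, hM⟩ := exists_norm_le_mul_rpow_of_homogeneous
    (fun l hl x hx ↦ h.bernoulliFunction_smul hl hx) h.continuousOn_bernoulliFunction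
  obtain ⟨ρ, hρ⟩ := eventually_atTop.1 <|
    ((tendsto_rpow_neg_atTop (by positivity : 0 < 2 * α)).const_mul M).eventually
      (gt_mem_nhds (by simpa using hc))
  refine ⟨max ρ 1, by positivity, fun x hx ↦ ?_⟩
  have hx0 : x ≠ 0 := norm_pos_iff.1 ((zero_lt_one.trans_le (le_max_right _ _)).trans_le hx)
  exact ((le_abs_self _).trans (hM x hx0)).trans_lt (hρ _ ((le_max_left _ _).trans hx))

theorem hasDerivWithinAt_bernoulliFunction_comp (h : IsHomogEuler α V P) {γ : ℝ → E3} {s : Set ℝ}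
    {t : ℝ} (hγ : HasDerivWithinAt γ (V (γ t)) s t) (ht : γ t ≠ 0) :
    HasDerivWithinAt (fun t ↦ bernoulliFunction V P (γ t)) 0 s t := by
  have hV := (h.differentiableAt_velocity ht).hasFDerivAt.comp_hasDerivWithinAt t hγ
  have hP := (h.differentiableAt_pressure ht).hasFDerivAt.comp_hasDerivWithinAt t hγ
  refine (hV.norm_sq.add (hP.const_mul 2)).congr_deriv ?_
  rw [Function.comp_apply, real_inner_comm, h.inner_fderiv_velocity_apply ht]
  ring

theorem hasDerivWithinAt_inner_comp (h : IsHomogEuler α V P) {γ : ℝ → E3} {s : Set ℝ}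
    {t : ℝ} (hγ : HasDerivWithinAt γ (V (γ t)) s t) (ht : γ t ≠ 0) :
    HasDerivWithinAt (fun t ↦ ⟪γ t, V (γ t)⟫_ℝ) (‖V (γ t)‖ ^ 2 + 2 * α * P (γ t)) s t := by
  have hV := (h.differentiableAt_velocity ht).hasFDerivAt.comp_hasDerivWithinAt t hγ
  refine (hγ.inner ℝ hV).congr_deriv ?_
  rw [real_inner_comm _ (γ t), h.inner_fderiv_velocity_apply ht, h.fderiv_pressure_apply_self ht,
    Function.comp_apply, real_inner_self_eq_norm_sq]
  ring

theorem bernoulliFunction_comp_eq (h : IsHomogEuler α V P) {γ : ℝ → E3} {a b : ℝ}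
    (hγ : IsIntegralCurveOn γ (fun _ ↦ V) (Icc a b)) (hγ0 : MapsTo γ (Icc a b) {0}ᶜ) :
    ∀ t ∈ Icc a b, bernoulliFunction V P (γ t) = bernoulliFunction V P (γ a) :=
  constant_of_has_deriv_right_zero
    (fun t ht ↦ (h.hasDerivWithinAt_bernoulliFunction_comp (hγ t ht) (hγ0 ht)).continuousWithinAt)
    (fun t ht ↦ (h.hasDerivWithinAt_bernoulliFunction_comp (hγ t (Ico_subset_Icc_self ht))
      (hγ0 (Ico_subset_Icc_self ht))).mono_of_mem_nhdsWithin (Icc_mem_nhdsGE_of_mem ht))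

theorem sq_norm_add_mul_sq_le (h : IsHomogEuler α V P) (hα : α ≤ 1) {γ : ℝ → E3} {T : ℝ}
    (hγ : IsIntegralCurveOn γ (fun _ ↦ V) (Icc 0 T)) (hγ0 : MapsTo γ (Icc 0 T) {0}ᶜ)
    (hmom : 0 ≤ ⟪γ 0, V (γ 0)⟫_ℝ) :
    ∀ t ∈ Icc 0 T, ‖γ 0‖ ^ 2 + α * bernoulliFunction V P (γ 0) * t ^ 2 ≤ ‖γ t‖ ^ 2 := by
  set c := bernoulliFunction V P (γ 0)
  -- the radial momentum `⟪γ, V ∘ γ⟫` grows at the rate `(1 - α) ‖V‖² + α c ≥ α c`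
  have hradial : MonotoneOn (fun t ↦ ⟪γ t, V (γ t)⟫_ℝ - α * c * t) (Icc 0 T) := by
    refine monotoneOn_Icc_of_hasDerivWithinAt_nonneg (fun t ht ↦
      (h.hasDerivWithinAt_inner_comp (hγ t ht) (hγ0 ht)).sub
        ((hasDerivWithinAt_id t _).const_mul (α * c))) fun t ht ↦ ?_
    have hc : ‖V (γ t)‖ ^ 2 + 2 * P (γ t) = c :=
      h.bernoulliFunction_comp_eq hγ hγ0 t (Ioo_subset_Icc_self ht)
    nlinarith [sq_nonneg ‖V (γ t)‖]
  have hnorm : MonotoneOn (fun t ↦ ‖γ t‖ ^ 2 - α * c * t ^ 2) (Icc 0 T) := by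
    refine monotoneOn_Icc_of_hasDerivWithinAt_nonneg (fun t ht ↦
      (hγ t ht).norm_sq.sub ((hasDerivWithinAt_pow 2 t).const_mul (α * c))) fun t ht ↦ ?_
    have := hradial ⟨le_rfl, ht.1.le.trans ht.2.le⟩ (Ioo_subset_Icc_self ht) ht.1.le
    simp only [mul_zero, sub_zero] at this
    simp only [Nat.cast_ofNat, Nat.add_one_sub_one, pow_one]
    linarith
  intro t ht
  have := hnorm ⟨le_rfl, ht.1.trans ht.2⟩ ht ht.1
  simp only at this
  linarith

theorem exists_isIntegralCurveOn_Icc (h : IsHomogEuler α V P) (hα0 : 0 ≤ α) (hα1 : α ≤ 1)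
    {x₀ : E3} (hx₀ : x₀ ≠ 0) (hmom : 0 ≤ ⟪x₀, V x₀⟫_ℝ) (hc : 0 ≤ bernoulliFunction V P x₀) {T : ℝ}
    (hT : 0 ≤ T) :
    ∃ γ : ℝ → E3, γ 0 = x₀ ∧ IsIntegralCurveOn γ (fun _ ↦ V) (Icc 0 T) ∧
      MapsTo γ (Icc 0 T) {0}ᶜ := by
  obtain ⟨M, hM0, hM⟩ := exists_norm_le_mul_rpow_of_homogeneous h.homV h.contV.continuousOn
  have hr : 0 < ‖x₀‖ := norm_pos_iff.2 hx₀
  set C := M * ‖x₀‖ ^ (-α)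
  have hspeed : ∀ z : E3, ‖x₀‖ ≤ ‖z‖ → ‖V z‖ ≤ C := fun z hz ↦
    (hM z (norm_pos_iff.1 (hr.trans_le hz))).trans <|
      mul_le_mul_of_nonneg_left (rpow_le_rpow_of_nonpos hr hz (by linarith)) hM0
  set K := closedBall (0 : E3) (‖x₀‖ + C * T) \ ball 0 ‖x₀‖
  have hKU : K ⊆ {0}ᶜ := fun z hz (h0 : z = 0) ↦ hz.2 (by simp [h0, hr])
  have hx₀K : x₀ ∈ K := by
    have : 0 ≤ C * T := by positivity
    simp [K, this]
  have hconfined : ∀ a ≤ T, ∀ γ : ℝ → E3, γ 0 = x₀ → IsIntegralCurveOn γ (fun _ ↦ V) (Icc 0 a) →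
      MapsTo γ (Icc 0 a) {0}ᶜ → MapsTo γ (Icc 0 a) K := by
    intro a haT γ hγ0 hγ hγU t ht
    have hfar : ∀ s ∈ Icc 0 a, ‖x₀‖ ≤ ‖γ s‖ := fun s hs ↦ by
      have := h.sq_norm_add_mul_sq_le hα1 hγ hγU (hγ0 ▸ hmom) s hs
      rw [hγ0] at this
      exact le_of_pow_le_pow_left₀ two_ne_zero (norm_nonneg _)
        (le_of_add_le_of_nonneg_left this (mul_nonneg (mul_nonneg hα0 hc) (sq_nonneg s)))
    have hmove := norm_image_sub_le_of_norm_deriv_le_segment' hγ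
      (fun s hs ↦ hspeed _ (hfar s (Ico_subset_Icc_self hs))) t ht
    rw [hγ0] at hmove
    refine ⟨?_, by simpa using hfar t ht⟩
    rw [mem_closedBall_zero_iff]
    calc ‖γ t‖ ≤ ‖x₀‖ + ‖γ t - x₀‖ := norm_le_norm_add_norm_sub' _ _
      _ ≤ ‖x₀‖ + C * T := by
        gcongr
        exact hmove.trans (by gcongr; linarith [ht.2])
  obtain ⟨γ, hγ0, hγ, hγK⟩ := exists_isIntegralCurveOn_Icc_of_mapsTo isOpen_compl_singleton
    h.contV ((isCompact_closedBall _ _).diff isOpen_ball) hKU hx₀K hT hconfined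
  exact ⟨γ, hγ0, hγ, hγK.mono_right hKU⟩

theorem bernoulliFunction_nonpos_of_inner_nonneg (h : IsHomogEuler α V P) (hα0 : 0 < α)
    (hα1 : α ≤ 1) {x₀ : E3} (hx₀ : x₀ ≠ 0) (hmom : 0 ≤ ⟪x₀, V x₀⟫_ℝ) :
    bernoulliFunction V P x₀ ≤ 0 := by
  by_contra! hc
  set c := bernoulliFunction V P x₀
  obtain ⟨ρ, hρ, hfar⟩ := h.exists_bernoulliFunction_lt hα0 hc
  set T := ρ / √(α * c)
  have hT : T ∈ Icc 0 T := ⟨by positivity, le_rfl⟩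
  obtain ⟨γ, hγ0, hγ, hγU⟩ := h.exists_isIntegralCurveOn_Icc hα0.le hα1 hx₀ hmom hc.le hT.1
  have hconst := h.bernoulliFunction_comp_eq hγ hγU T hT
  have hgrowth := h.sq_norm_add_mul_sq_le hα1 hγ hγU (hγ0 ▸ hmom) T hT
  rw [hγ0] at hconst hgrowth
  have hTρ : α * c * T ^ 2 = ρ ^ 2 := by
    rw [div_pow, sq_sqrt (by positivity)]
    field_simp
  have hfarT : ρ ≤ ‖γ T‖ :=
    le_of_pow_le_pow_left₀ two_ne_zero (norm_nonneg _) (by nlinarith [sq_nonneg ‖x₀‖])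
  exact (hfar _ hfarT).ne hconst

theorem neg (h : IsHomogEuler α V P) : IsHomogEuler α (-V) P where
  contV := h.contV.neg
  contP := h.contP
  homV l hl x hx := by simp [h.homV l hl x hx]
  homP := h.homP
  euler x hx := by simpa [fderiv_neg] using h.euler x hx
  divFree x hx := by simpa [div3, fderiv_neg] using h.divFree x hx

theorem bernoulliFunction_nonpos (h : IsHomogEuler α V P) (hα0 : 0 < α) (hα1 : α ≤ 1) {x : E3}
    (hx : x ≠ 0) : bernoulliFunction V P x ≤ 0 := by
  rcases le_total 0 ⟪x, V x⟫_ℝ with hmom | hmom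
  · exact h.bernoulliFunction_nonpos_of_inner_nonneg hα0 hα1 hx hmom
  · simpa [bernoulliFunction] using
      h.neg.bernoulliFunction_nonpos_of_inner_nonneg hα0 hα1 hx
        (by simpa [inner_neg_right] using hmom)

end IsHomogEuler

/-- for `0 < α < 1` the Bernoulli function is nonpositive,
and in particular the pressure is nonpositive. -/
theorem stmt9 (α : ℝ) (hα0 : 0 < α) (hα1 : α < 1) (V : E3 → E3) (P : E3 → ℝ)
    (h : IsHomogEuler α V P) :
    ∀ x : E3, x ≠ 0 → ‖V x‖ ^ 2 + 2 * P x ≤ 0 ∧ P x ≤ 0 := by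
  intro x hx
  have hB : ‖V x‖ ^ 2 + 2 * P x ≤ 0 := h.bernoulliFunction_nonpos hα0 hα1.le hx
  exact ⟨hB, by linarith [sq_nonneg ‖V x‖]⟩
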